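/- arXiv:2203.03297 — 2 statements merged into one kernel-verified Lean document; each statement's English description precedes it below -/
import Mathlib

section
/- In a one-shot mutual-exclusive propagation, the number of sink cells is at least the number of source cells. -/
/-- In an o-MEP, the number of sink cells is at least the number of source cells. -/
theorem oMEP_sinks_ge_sources {N : Type*} [Fintype N] (G : SimpleGraph N)
    (h : N → N)
    (hpio : ∀ i, h i = i ∨ G.Adj (h i) i)
    (hreach : ∀ i, ∃ k, h (h^[k] i) = h^[k] i)
    (hacyc : ∀ i k, 0 < k → h^[k] i = i → h i = i) :
    {i : N | h i = i}.ncard ≤ {i : N | ∀ j, h j = i → j = i}.ncard := by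
  classical
  set d : N → ℕ := fun i => Nat.find (hreach i) with hd
  have hdspec : ∀ i, h (h^[d i] i) = h^[d i] i := fun i => Nat.find_spec (hreach i)
  set r : N → N := fun i => h^[d i] i with hr
  have hiter : ∀ (p : N), h p = p → ∀ m, h^[m] p = p :=
    fun p hp m => Function.iterate_fixed hp m
  have huniq : ∀ i a b, h (h^[a] i) = h^[a] i → h (h^[b] i) = h^[b] i →
      h^[a] i = h^[b] i := by
    have key : ∀ i a b, a ≤ b → h (h^[a] i) = h^[a] i → h^[b] i = h^[a] i := by
      intro i a b hab ha
      have : h^[b] i = h^[b - a] (h^[a] i) := by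
        rw [← Function.iterate_add_apply]; congr 1; omega
      rw [this, hiter _ ha]
    intro i a b ha hb
    rcases le_total a b with hab | hab
    · exact (key i a b hab ha).symm
    · exact key i b a hab hb
  have hrh : ∀ i, r (h i) = r i := by
    intro i
    have h1 : r (h i) = h^[d (h i) + 1] i := by
      simp only [hr, Function.iterate_succ_apply]
    have h2 : h (h^[d (h i) + 1] i) = h^[d (h i) + 1] i := by
      rw [← h1]; exact hdspec (h i)
    rw [h1, hr]
    exact huniq i _ _ h2 (hdspec i)
  have key : ∀ s, h s = s → ∃ x, (∀ j, h j = x → j = x) ∧ r x = s := by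
    intro s hs
    have hne : (Finset.univ.filter (fun x => r x = s)).Nonempty := by
      refine ⟨s, ?_⟩
      simp only [Finset.mem_filter, Finset.mem_univ, true_and, hr]
      exact hiter s hs (d s)
    obtain ⟨x, hx, hmax⟩ := Finset.exists_max_image _ d hne
    simp only [Finset.mem_filter, Finset.mem_univ, true_and] at hx
    refine ⟨x, ?_, hx⟩
    intro j hj
    by_contra hne'
    have hrj : r j = s := by rw [← hrh j, hj, hx]
    have hdj : d j ≤ d x := hmax j (by simp [hrj])
    rcases Nat.eq_zero_or_pos (d j) with h0 | hpos
    · have hfj := hdspec j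
      rw [h0, Function.iterate_zero_apply] at hfj
      exact hne' (by rw [← hj, hfj])
    · have hfixj : h (h^[d j - 1] x) = h^[d j - 1] x := by
        have : h^[d j] j = h^[d j - 1] x := by
          conv_lhs => rw [show d j = (d j - 1) + 1 from by omega]
          rw [Function.iterate_succ_apply, hj]
        rw [← this]; exact hdspec j
      have : d x ≤ d j - 1 := Nat.find_min' (hreach x) hfixj
      omega
  choose f hf1 hf2 using key
  set g : N → N := fun s => if hs : h s = s then f s hs else s with hg
  refine Set.ncard_le_ncard_of_injOn g ?_ ?_ (Set.toFinite _)
  · intro a ha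
    simp only [Set.mem_setOf_eq] at ha ⊢
    simp only [hg, dif_pos ha]
    exact hf1 a ha
  · intro a ha b hb hab
    simp only [Set.mem_setOf_eq] at ha hb
    have h1 : r (g a) = a := by simp only [hg, dif_pos ha]; exact hf2 a ha
    have h2 : r (g b) = b := by simp only [hg, dif_pos hb]; exact hf2 b hb
    rw [← h1, hab, h2]
end

section
/- If the propagation network G is a tree, then no cell in an o-MEP is a ridge cell; that is, every cell has either a parent neighbor, a child neighbor, or an alien neighbor (a neighbor in a different propagation region), or is an isolated vertex with no neighbors — there is no cell all of whose neighbors are family neighbors. -/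
/-!
Following the pioneers from a cell `i` to its source gives a walk in `G` all of whose edges are
pioneer edges `s(a, h a)`. If `i` and `j` are adjacent with the same source, the walk from `i`
to the source followed by the reversed walk from `j` joins `i` to `j`. In a tree every edge is a
bridge, so the edge `s(i, j)` lies on that walk and is therefore a pioneer edge: `h i = j` or
`h j = i`.
-/

namespace SimpleGraph

variable {V : Type*} {G : SimpleGraph V}

theorem IsAcyclic.adj_mem_edges_or_mem_edges (hG : G.IsAcyclic) {i j c : V} (hij : G.Adj i j)
    (p : G.Walk i c) (q : G.Walk j c) : s(i, j) ∈ p.edges ∨ s(i, j) ∈ q.edges := by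
  have hbridge : G.IsBridge s(i, j) := isAcyclic_iff_forall_isBridge.mp hG hij
  have hmem := isBridge_iff_forall_walk_mem_edges.mp hbridge (p.append q.reverse)
  simpa only [Walk.edges_append, Walk.edges_reverse, List.mem_append, List.mem_reverse] using hmem

theorem exists_walk_iterate_of_pioneer {h : V → V} (hpio : ∀ i, h i = i ∨ G.Adj (h i) i) :
    ∀ (k : ℕ) (x : V), ∃ p : G.Walk x (h^[k] x), ∀ e ∈ p.edges, ∃ a, s(a, h a) = e
  | 0, x => ⟨.nil, by simp⟩
  | k + 1, x => by
    obtain ⟨p, hp⟩ := exists_walk_iterate_of_pioneer hpio k (h x)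
    have hend : h^[k] (h x) = h^[k + 1] x := (Function.iterate_succ_apply h k x).symm
    rcases hpio x with hfix | hadj
    · exact ⟨p.copy hfix hend, by simpa only [Walk.edges_copy] using hp⟩
    · refine ⟨.cons hadj.symm (p.copy rfl hend), ?_⟩
      simp only [Walk.edges_cons, Walk.edges_copy, List.mem_cons, forall_eq_or_imp]
      exact ⟨⟨x, rfl⟩, hp⟩

end SimpleGraph

open SimpleGraph in
theorem oMEP_tree_no_family_neighbor_general {N : Type*} (G : SimpleGraph N)
    (htree : G.IsTree)
    (h : N → N)
    (hpio : ∀ i, h i = i ∨ G.Adj (h i) i)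
    (src : N → N)
    (hsrc : ∀ i, (∃ k, h^[k] i = src i) ∧ h (src i) = src i) :
    ∀ i j, G.Adj i j → ¬(src i = src j ∧ h i ≠ j ∧ h j ≠ i) := by
  rintro i j hij ⟨hs, hi, hj⟩
  obtain ⟨ki, hki⟩ := (hsrc i).1
  obtain ⟨kj, hkj⟩ := (hsrc j).1
  obtain ⟨p, hp⟩ := exists_walk_iterate_of_pioneer hpio ki i
  obtain ⟨q, hq⟩ := exists_walk_iterate_of_pioneer hpio kj j
  have hpioneer : ∃ a, s(a, h a) = s(i, j) := by
    rcases htree.isAcyclic.adj_mem_edges_or_mem_edges hij (p.copy rfl (hki.trans hs))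
        (q.copy rfl hkj) with hmem | hmem
    · exact hp _ (by simpa only [Walk.edges_copy] using hmem)
    · exact hq _ (by simpa only [Walk.edges_copy] using hmem)
  obtain ⟨a, ha⟩ := hpioneer
  rcases Sym2.eq_iff.mp ha with ⟨rfl, rfl⟩ | ⟨rfl, rfl⟩
  · exact hi rfl
  · exact hj rfl

/-- If the propagation network `G` is a tree, then no cell of an o-MEP has a family
neighbor (hence there are no ridge cells). -/
theorem oMEP_tree_no_family_neighbor {N : Type*} [Fintype N] (G : SimpleGraph N)
    (htree : G.IsTree)
    (h : N → N)
    (hpio : ∀ i, h i = i ∨ G.Adj (h i) i)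
    (hacyc : ∀ i k, 0 < k → h^[k] i = i → h i = i)
    (src : N → N)
    (hsrc : ∀ i, (∃ k, h^[k] i = src i) ∧ h (src i) = src i) :
    ∀ i j, G.Adj i j → ¬(src i = src j ∧ h i ≠ j ∧ h j ≠ i) :=
  oMEP_tree_no_family_neighbor_general G htree h hpio src hsrc
end
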